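/- arXiv:1108.2142 — 3 statements merged into one kernel-verified Lean document; each statement's English description precedes it below -/
import Mathlib

section
/- Let (C^j, P_j) be a cochain complex of finite-dimensional complex inner product spaces, Δ_j = P_{j-1}P_{j-1}^* + P_j^* P_j, and T = (T_j) an endomorphism of the complex (P_j T_j = T_{j+1} P_j) that additionally commutes with each Δ_j. Denote by E_λ^j the λ-eigenspace of Δ_j. Then for every λ ≠ 0, Σ_{j=0}^N (−1)^j tr(T_j restricted to E_λ^j) = 0. -/
/-!
STATEMENT 4: For a chain endomorphism `T` of a cochain complex of finite-dimensional complex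
inner product spaces which commutes with the Laplacians `Δ_j`, and any eigenvalue `λ ≠ 0`,
the alternating sum `Σ (−1)^j tr(T_j |_{E_λ^j})` over the `λ`-eigenspaces of `Δ_j` vanishes.

Paper degree `j` corresponds to index `j + 1`; the spaces in degrees `0` and `N + 2` are
zero, implementing the conventions `P_{-1} = 0`, `P_N = 0`.
-/

theorem stmt4 (N : ℕ) (C : ℕ → Type)
    [∀ j, NormedAddCommGroup (C j)] [∀ j, InnerProductSpace ℂ (C j)]
    [∀ j, FiniteDimensional ℂ (C j)]
    (P : ∀ j : ℕ, C j →ₗ[ℂ] C (j + 1))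
    (hC0 : ∀ x : C 0, x = 0)
    (hCtop : ∀ x : C (N + 2), x = 0)
    (hPP : ∀ (j : ℕ) (x : C j), P (j + 1) (P j x) = 0)
    (Δ : ∀ j : ℕ, C (j + 1) →ₗ[ℂ] C (j + 1))
    (hΔ : ∀ j : ℕ, Δ j = (P j) ∘ₗ (LinearMap.adjoint (P j))
        + (LinearMap.adjoint (P (j + 1))) ∘ₗ (P (j + 1)))
    (T : ∀ j : ℕ, C j →ₗ[ℂ] C j)
    (hT : ∀ (j : ℕ) (x : C j), P j (T j x) = T (j + 1) (P j x))
    (hTΔ : ∀ j : ℕ, (T (j + 1)) ∘ₗ (Δ j) = (Δ j) ∘ₗ (T (j + 1)))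
    (lam : ℂ) (hlam : lam ≠ 0)
    -- `S j` is the restriction of `T_j` to the eigenspace `E_λ^j`
    (S : ∀ j : ℕ, Module.End.eigenspace (Δ j) lam →ₗ[ℂ] Module.End.eigenspace (Δ j) lam)
    (hS : ∀ (j : ℕ) (x : C (j + 1)) (hx : x ∈ Module.End.eigenspace (Δ j) lam),
      ((S j ⟨x, hx⟩ : Module.End.eigenspace (Δ j) lam) : C (j + 1)) = T (j + 1) x) :
    ∑ j ∈ Finset.range (N + 1), (-1 : ℂ) ^ j * LinearMap.trace ℂ _ (S j) = 0 := by
  classical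
  -- composition of adjoints vanishes
  have hadj : ∀ (j : ℕ) (y : C (j + 2)),
      LinearMap.adjoint (P j) (LinearMap.adjoint (P (j + 1)) y) = 0 := by
    intro j y
    have h0 : (P (j + 1)) ∘ₗ (P j) = 0 := by
      ext x; exact hPP j x
    have h1 : LinearMap.adjoint (P j) ∘ₗ LinearMap.adjoint (P (j + 1)) = 0 := by
      rw [← LinearMap.adjoint_comp, h0, map_zero]
    exact LinearMap.ext_iff.mp h1 y
  -- P maps eigenspaces to eigenspaces
  have hmemP : ∀ (j : ℕ) (x : C (j + 1)), x ∈ Module.End.eigenspace (Δ j) lam →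
      P (j + 1) x ∈ Module.End.eigenspace (Δ (j + 1)) lam := by
    intro j x hx
    rw [Module.End.mem_eigenspace_iff] at hx ⊢
    have hx' := congrArg (P (j + 1)) hx
    rw [hΔ j] at hx'
    rw [hΔ (j + 1)]
    simp only [LinearMap.add_apply, LinearMap.comp_apply, map_add, map_smul] at hx' ⊢
    rw [hPP (j + 1) x, map_zero, add_zero]
    rw [hPP j (LinearMap.adjoint (P j) x), zero_add] at hx'
    exact hx'
  -- the adjoint of P maps eigenspaces to eigenspaces
  have hmemQ : ∀ (j : ℕ) (x : C (j + 2)), x ∈ Module.End.eigenspace (Δ (j + 1)) lam →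
      LinearMap.adjoint (P (j + 1)) x ∈ Module.End.eigenspace (Δ j) lam := by
    intro j x hx
    rw [Module.End.mem_eigenspace_iff] at hx ⊢
    have hx' := congrArg (LinearMap.adjoint (P (j + 1))) hx
    rw [hΔ (j + 1)] at hx'
    rw [hΔ j]
    simp only [LinearMap.add_apply, LinearMap.comp_apply, map_add, map_smul] at hx' ⊢
    rw [hadj j x, map_zero, zero_add]
    rw [hadj (j + 1) (P (j + 2) x), add_zero] at hx'
    exact hx'
  have hΔapp : ∀ (j : ℕ) (y : C (j + 1)), Δ j y
      = P j (LinearMap.adjoint (P j) y) + LinearMap.adjoint (P (j + 1)) (P (j + 1) y) := by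
    intro j y; rw [hΔ j]; rfl
  -- restricted maps between eigenspaces
  let p : ∀ j : ℕ, (Module.End.eigenspace (Δ j) lam) →ₗ[ℂ]
      (Module.End.eigenspace (Δ (j + 1)) lam) :=
    fun j => (P (j + 1)).restrict (fun x hx => hmemP j x hx)
  let q : ∀ j : ℕ, (Module.End.eigenspace (Δ (j + 1)) lam) →ₗ[ℂ]
      (Module.End.eigenspace (Δ j) lam) :=
    fun j => (LinearMap.adjoint (P (j + 1))).restrict (fun x hx => hmemQ j x hx)
  let b : ℕ → ℂ := fun j => LinearMap.trace ℂ _ ((S j) ∘ₗ ((q j) ∘ₗ (p j)))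
  -- S commutes with p
  have hSp : ∀ j : ℕ, (S (j + 1)) ∘ₗ (p j) = (p j) ∘ₗ (S j) := by
    intro j
    ext x
    simp only [LinearMap.comp_apply]
    have e1 : p j x = ⟨P (j + 1) ↑x, hmemP j ↑x x.2⟩ :=
      Subtype.ext (LinearMap.restrict_coe_apply _ _ _)
    have e2 : S j x = S j ⟨↑x, x.2⟩ := by congr
    calc (↑((S (j + 1)) ((p j) x)) : C (j + 2))
        = ↑((S (j + 1)) ⟨P (j + 1) ↑x, hmemP j ↑x x.2⟩) := by rw [e1]
      _ = T (j + 2) (P (j + 1) ↑x) := hS (j + 1) _ _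
      _ = P (j + 1) (T (j + 1) ↑x) := (hT (j + 1) ↑x).symm
      _ = P (j + 1) ↑(S j x) := by rw [e2, hS j ↑x x.2]
      _ = ↑((p j) ((S j) x)) := (LinearMap.restrict_coe_apply _ _ _).symm
  -- trace identity linking consecutive degrees
  have hab : ∀ j : ℕ,
      LinearMap.trace ℂ _ ((S (j + 1)) ∘ₗ ((p j) ∘ₗ (q j))) = b j := by
    intro j
    calc LinearMap.trace ℂ _ ((S (j + 1)) ∘ₗ ((p j) ∘ₗ (q j)))
        = LinearMap.trace ℂ _ (((p j) ∘ₗ (S j)) ∘ₗ (q j)) := by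
          rw [← LinearMap.comp_assoc, hSp j]
      _ = LinearMap.trace ℂ _ ((p j) ∘ₗ ((S j) ∘ₗ (q j))) := by
          rw [LinearMap.comp_assoc]
      _ = LinearMap.trace ℂ _ (((S j) ∘ₗ (q j)) ∘ₗ (p j)) := by
          rw [LinearMap.trace_comp_comm']
      _ = b j := by rw [LinearMap.comp_assoc]
  -- degree 0: lam * tr(S 0) = b 0
  have hdeg0 : lam * LinearMap.trace ℂ _ (S 0) = b 0 := by
    have key : ∀ x : (Module.End.eigenspace (Δ 0) lam), (q 0) ((p 0) x) = lam • x := by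
      intro x
      apply Subtype.ext
      have hx := Module.End.mem_eigenspace_iff.mp x.2
      rw [hΔapp 0 ↑x] at hx
      have h1 : P 0 (LinearMap.adjoint (P 0) ↑x) = 0 := by
        rw [hC0 (LinearMap.adjoint (P 0) ↑x)]; exact map_zero _
      rw [h1] at hx
      simp only [zero_add] at hx
      simpa only [q, p, LinearMap.restrict_coe_apply, SetLike.val_smul] using hx
    have hmap : (S 0) ∘ₗ ((q 0) ∘ₗ (p 0)) = lam • (S 0) := by
      ext x
      simp only [LinearMap.comp_apply, LinearMap.smul_apply, key x, map_smul]
    show lam * LinearMap.trace ℂ _ (S 0) = LinearMap.trace ℂ _ ((S 0) ∘ₗ ((q 0) ∘ₗ (p 0)))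
    rw [hmap, map_smul, smul_eq_mul]
  -- higher degrees
  have hdeg : ∀ j : ℕ, lam * LinearMap.trace ℂ _ (S (j + 1)) =
      LinearMap.trace ℂ _ ((S (j + 1)) ∘ₗ ((p j) ∘ₗ (q j))) + b (j + 1) := by
    intro j
    have key : ∀ x : (Module.End.eigenspace (Δ (j + 1)) lam),
        (p j) ((q j) x) + (q (j + 1)) ((p (j + 1)) x) = lam • x := by
      intro x
      apply Subtype.ext
      have hx := Module.End.mem_eigenspace_iff.mp x.2
      rw [hΔapp (j + 1) ↑x] at hx
      simpa only [Submodule.coe_add, q, p, LinearMap.restrict_coe_apply,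
        SetLike.val_smul] using hx
    have hmap : (S (j + 1)) ∘ₗ ((p j) ∘ₗ (q j)) + (S (j + 1)) ∘ₗ ((q (j + 1)) ∘ₗ (p (j + 1)))
        = lam • (S (j + 1)) := by
      ext x
      simp only [LinearMap.add_apply, LinearMap.comp_apply, LinearMap.smul_apply]
      rw [← map_add, key x, map_smul]
    have := congrArg (LinearMap.trace ℂ _) hmap
    rw [map_add, map_smul, smul_eq_mul] at this
    exact this.symm
  -- top degree vanishing
  have hbN : b N = 0 := by
    have key : ∀ x : (Module.End.eigenspace (Δ N) lam), (q N) ((p N) x) = 0 := by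
      intro x
      apply Subtype.ext
      simp only [q, p, LinearMap.restrict_coe_apply, ZeroMemClass.coe_zero]
      rw [hCtop (P (N + 1) ↑x), map_zero]
    have hmap : (S N) ∘ₗ ((q N) ∘ₗ (p N)) = 0 := by
      ext x
      simp only [LinearMap.comp_apply, key x, map_zero, LinearMap.zero_apply]
    show LinearMap.trace ℂ _ ((S N) ∘ₗ ((q N) ∘ₗ (p N))) = 0
    rw [hmap, map_zero]
  -- put everything together
  have hmul : lam * (∑ j ∈ Finset.range (N + 1),
      (-1 : ℂ) ^ j * LinearMap.trace ℂ _ (S j)) = 0 := by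
    rw [Finset.mul_sum]
    have hterm : ∀ j ∈ Finset.range (N + 1),
        lam * ((-1 : ℂ) ^ j * LinearMap.trace ℂ _ (S j))
          = (-1 : ℂ) ^ j * (lam * LinearMap.trace ℂ _ (S j)) := by
      intro j _; ring
    rw [Finset.sum_congr rfl hterm, Finset.sum_range_succ']
    have hshift : ∀ j ∈ Finset.range N,
        (-1 : ℂ) ^ (j + 1) * (lam * LinearMap.trace ℂ _ (S (j + 1)))
          = ((-1 : ℂ) ^ (j + 1) * b (j + 1)) - ((-1 : ℂ) ^ j * b j) := by
      intro j _
      rw [hdeg j, hab j]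
      ring
    rw [Finset.sum_congr rfl hshift, Finset.sum_range_sub (fun j => (-1 : ℂ) ^ j * b j)]
    rw [hdeg0, hbN, mul_zero]
    ring
  exact (mul_eq_zero.mp hmul).resolve_left hlam
end

section
/- Let (C^j, P_j) be a cochain complex of finite-dimensional complex inner product spaces with Laplacians Δ_j, and T = (T_j) an endomorphism of the complex commuting with each Δ_j. Then for every t > 0, the Lefschetz number satisfies L(T) = Σ_{j=0}^N (−1)^j tr(T_j ∘ exp(−t Δ_j)). (McKean–Singer / Bott alternating sum identity in the finite-dimensional setting.) -/
/-!
Write `L = -tΔ`. Since `P Δ = Δ P`, the operator `exp L` commutes with the differentials, so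
`F = T ∘ exp L` is again a chain map. On a cocycle `x` one has `Δ x = P P* x`, a coboundary, and `Δ`
preserves coboundaries, so every term of `exp L x - x = Σ Lⁿ⁺¹ x / (n+1)!` is a coboundary: `F`
and `T` induce the same map on cohomology. The claim is therefore the Hopf trace formula for `F`.
In each degree, `tr F_j` is the trace on the coboundaries `im P_{j-1}`, plus the trace on
cohomology, plus the trace on `C^j / ker P_j ≅ im P_j`; the coboundary terms telescope in the
alternating sum and vanish at the two zero ends of the complex.
-/

open NormedSpace

theorem Finset.sum_range_neg_one_pow_mul_add_add_succ {R : Type*} [CommRing R] (a b : ℕ → R)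
    (n : ℕ) :
    ∑ j ∈ range n, (-1) ^ j * (a j + b j + a (j + 1))
      = ∑ j ∈ range n, (-1) ^ j * b j + a 0 - (-1) ^ n * a n := by
  induction n with
  | zero => simp
  | succ n ih => rw [sum_range_succ, sum_range_succ, ih, pow_succ]; ring

namespace LinearMap

section CommRing

variable {R V W : Type*} [CommRing R] [AddCommGroup V] [Module R V] [AddCommGroup W] [Module R W]

theorem trace_eq_of_comp_equiv_eq {f : V →ₗ[R] V} {g : W →ₗ[R] W} (e : V ≃ₗ[R] W)
    (h : g ∘ₗ e = e ∘ₗ f) : trace R W g = trace R V f := by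
  rw [← trace_conj' f e]
  congr 1
  ext x
  simpa using LinearMap.congr_fun h (e.symm x)

theorem trace_eq_zero_of_subsingleton [Subsingleton W] (g : W →ₗ[R] W) : trace R W g = 0 := by
  rw [Subsingleton.elim g 0, map_zero]

theorem apply_mem_ker_of_comp_eq {q : V →ₗ[R] W} {f : V →ₗ[R] V} {g : W →ₗ[R] W}
    (h : q ∘ₗ f = g ∘ₗ q) : ∀ x ∈ ker q, f x ∈ ker q := fun x hx => by
  rw [mem_ker] at hx ⊢
  rw [← comp_apply, h, comp_apply, hx, map_zero]

theorem apply_mem_range_of_comp_eq {q : V →ₗ[R] W} {f : V →ₗ[R] V} {g : W →ₗ[R] W}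
    (h : q ∘ₗ f = g ∘ₗ q) : ∀ y ∈ range q, g y ∈ range q := by
  rintro _ ⟨x, rfl⟩
  exact ⟨f x, by rw [← comp_apply, h, comp_apply]⟩

theorem trace_mapQ_ker_eq_trace_restrict_range {q : V →ₗ[R] W} {f : V →ₗ[R] V}
    {g : W →ₗ[R] W} (h : q ∘ₗ f = g ∘ₗ q) :
    trace R (V ⧸ ker q) ((ker q).mapQ (ker q) f (apply_mem_ker_of_comp_eq h))
      = trace R (range q) (g.restrict (apply_mem_range_of_comp_eq h)) := by
  refine (trace_eq_of_comp_equiv_eq q.quotKerEquivRange ?_).symm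
  ext x
  exact LinearMap.congr_fun h.symm x

abbrev cohomology {U : Type*} [AddCommGroup U] [Module R U] (p : U →ₗ[R] V) (q : V →ₗ[R] W) :=
  ker q ⧸ (range p).comap (ker q).subtype

end CommRing

variable {𝕜 V W : Type*} [Field 𝕜] [AddCommGroup V] [Module 𝕜 V] [AddCommGroup W] [Module 𝕜 W]
  [FiniteDimensional 𝕜 V]

theorem trace_eq_trace_restrict_add_trace_mapQ (f : V →ₗ[𝕜] V) (p : Submodule 𝕜 V)
    (hf : ∀ x ∈ p, f x ∈ p) :
    trace 𝕜 V f = trace 𝕜 p (f.restrict hf) + trace 𝕜 (V ⧸ p) (p.mapQ p f hf) := by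
  -- Split `f` along a complement `q` of `p`; the `q`-part is the quotient map under `V ⧸ p ≃ q`.
  obtain ⟨q, hpq⟩ := p.exists_isCompl
  have hsplit : f = (f ∘ₗ p.subtype) ∘ₗ p.projectionOnto q hpq
      + (f ∘ₗ q.subtype) ∘ₗ q.projectionOnto p hpq.symm := by
    rw [comp_assoc, comp_assoc, ← comp_add, ← Submodule.projection, ← Submodule.projection,
      Submodule.projection_add_projection_eq_id, comp_id]
  have hp : p.projectionOnto q hpq ∘ₗ f ∘ₗ p.subtype = f.restrict hf := by
    ext x
    exact congrArg Subtype.val (Submodule.projectionOnto_apply_left hpq ⟨f x, hf x x.2⟩)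
  have hq : (q.projectionOnto p hpq.symm ∘ₗ f ∘ₗ q.subtype) ∘ₗ
      (p.quotientEquivOfIsCompl q hpq : (V ⧸ p) →ₗ[𝕜] q)
      = p.quotientEquivOfIsCompl q hpq ∘ₗ p.mapQ p f hf := by
    ext x
    have hx : f x - f (q.projection p hpq.symm x) ∈ p := by
      rw [← map_sub, ← Submodule.projection_eq_self_sub_projection hpq.symm]
      exact hf _ (Submodule.projection_apply_mem hpq _)
    have := (Submodule.projection_apply_eq_zero_iff hpq.symm).2 hx
    rw [map_sub, sub_eq_zero] at this
    simpa using this.symm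
  conv_lhs => rw [hsplit]
  rw [map_add, trace_comp_comm' (p.projectionOnto q hpq),
    trace_comp_comm' (q.projectionOnto p hpq.symm), hp, ← trace_eq_of_comp_equiv_eq _ hq]

theorem trace_eq_trace_range_add_trace_cohomology_add_trace_range {U : Type*} [AddCommGroup U]
    [Module 𝕜 U] {p : U →ₗ[𝕜] V} {q : V →ₗ[𝕜] W} (hpq : q ∘ₗ p = 0)
    {f : V →ₗ[𝕜] V} {g : W →ₗ[𝕜] W} (h : q ∘ₗ f = g ∘ₗ q) (hf : ∀ x ∈ range p, f x ∈ range p)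
    (τ : cohomology p q →ₗ[𝕜] cohomology p q)
    (hτ : ∀ (x : V) (hx : x ∈ ker q) (hfx : f x ∈ ker q),
      τ (Submodule.Quotient.mk ⟨x, hx⟩) = Submodule.Quotient.mk ⟨f x, hfx⟩) :
    trace 𝕜 V f = trace 𝕜 (range p) (f.restrict hf) + trace 𝕜 (cohomology p q) τ
      + trace 𝕜 (range q) (g.restrict (apply_mem_range_of_comp_eq h)) := by
  set fK := f.restrict (apply_mem_ker_of_comp_eq h)
  set B := (range p).comap (ker q).subtype
  have hfK : ∀ x ∈ B, fK x ∈ B := fun x hx => hf x hx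
  have hB : trace 𝕜 B (fK.restrict hfK) = trace 𝕜 (range p) (f.restrict hf) :=
    (trace_eq_of_comp_equiv_eq (Submodule.comapSubtypeEquivOfLe (range_le_ker_iff.2 hpq)) rfl).symm
  have hH : B.mapQ B fK hfK = τ := by
    ext x
    exact (hτ x x.2 _).symm
  rw [trace_eq_trace_restrict_add_trace_mapQ f (ker q) (apply_mem_ker_of_comp_eq h),
    trace_mapQ_ker_eq_trace_restrict_range h, trace_eq_trace_restrict_add_trace_mapQ fK B hfK, hB,
    hH]

theorem hopf_trace_formula {C : ℕ → Type*} [∀ j, AddCommGroup (C j)] [∀ j, Module 𝕜 (C j)]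
    [∀ j, FiniteDimensional 𝕜 (C j)] (N : ℕ) [Subsingleton (C 0)] [Subsingleton (C (N + 2))]
    (P : ∀ j, C j →ₗ[𝕜] C (j + 1)) (hPP : ∀ j, P (j + 1) ∘ₗ P j = 0)
    (F : ∀ j, C (j + 1) →ₗ[𝕜] C (j + 1)) (hPF : ∀ j, P (j + 1) ∘ₗ F j = F (j + 1) ∘ₗ P (j + 1))
    (hFR : ∀ j, ∀ y ∈ range (P j), F j y ∈ range (P j))
    (τ : ∀ j, cohomology (P j) (P (j + 1)) →ₗ[𝕜] cohomology (P j) (P (j + 1)))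
    (hτ : ∀ j (x : C (j + 1)) (hx : x ∈ ker (P (j + 1))) (hFx : F j x ∈ ker (P (j + 1))),
      τ j (Submodule.Quotient.mk ⟨x, hx⟩) = Submodule.Quotient.mk ⟨F j x, hFx⟩) :
    ∑ j ∈ Finset.range (N + 1), (-1) ^ j * trace 𝕜 _ (F j)
      = ∑ j ∈ Finset.range (N + 1), (-1) ^ j * trace 𝕜 _ (τ j) := by
  have hs0 : trace 𝕜 _ ((F 0).restrict (hFR 0)) = 0 := by
    have : Subsingleton (range (P 0)) :=
      ⟨by rintro ⟨_, u, rfl⟩ ⟨_, v, rfl⟩; rw [Subsingleton.elim u v]⟩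
    exact trace_eq_zero_of_subsingleton _
  have hsN : trace 𝕜 _ ((F (N + 1)).restrict (hFR (N + 1))) = 0 :=
    trace_eq_zero_of_subsingleton _
  rw [Finset.sum_congr rfl fun j _ => by
      rw [trace_eq_trace_range_add_trace_cohomology_add_trace_range (hPP j) (hPF j) (hFR j) (τ j)
        (hτ j)],
    Finset.sum_range_neg_one_pow_mul_add_add_succ, hs0, hsN]
  ring

end LinearMap

namespace ContinuousLinearMap

section Exp

variable {𝕜 V W : Type*} [RCLike 𝕜] [NormedAddCommGroup V] [NormedSpace 𝕜 V] [CompleteSpace V]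
  [NormedAddCommGroup W] [NormedSpace 𝕜 W] [CompleteSpace W]

theorem comp_exp_eq_exp_comp {g : V →L[𝕜] W} {a : V →L[𝕜] V} {b : W →L[𝕜] W}
    (h : g ∘L a = b ∘L g) : g ∘L exp a = exp b ∘L g := by
  have hpow : ∀ n : ℕ, g ∘L (a ^ n) = (b ^ n) ∘L g := by
    intro n
    induction n with
    | zero => rfl
    | succ n ih => rw [pow_succ, pow_succ, mul_def, mul_def, ← comp_assoc, ih, comp_assoc, h,
        comp_assoc]
  have ha := (exp_series_hasSum_exp' (𝕂 := 𝕜) a).mapL (compL 𝕜 V V W g)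
  have hb := (exp_series_hasSum_exp' (𝕂 := 𝕜) b).mapL ((compL 𝕜 V W W).flip g)
  have hterm : ∀ n : ℕ, compL 𝕜 V V W g ((n.factorial : 𝕜)⁻¹ • a ^ n)
      = (compL 𝕜 V W W).flip g ((n.factorial : 𝕜)⁻¹ • b ^ n) := fun n => by simp [hpow]
  simp only [hterm] at ha
  exact ha.unique hb

theorem exp_apply_sub_self_mem {a : V →L[𝕜] V} {p : Submodule 𝕜 V} (hp : IsClosed (p : Set V))
    (ha : ∀ y ∈ p, a y ∈ p) {x : V} (hx : a x ∈ p) : exp a x - x ∈ p := by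
  have hsum : HasSum (fun n : ℕ => ((n + 1).factorial : 𝕜)⁻¹ • (a ^ n) (a x)) (exp a x - x) := by
    simpa using (hasSum_nat_add_iff' 1).2 ((exp_series_hasSum_exp' (𝕂 := 𝕜) a).mapL (apply 𝕜 V x))
  rw [← hsum.tsum_eq]
  refine tsum_mem hp fun n => p.smul_mem _ ?_
  induction n with
  | zero => simpa using hx
  | succ n ih => rw [pow_succ', mul_apply_eq_comp]; exact ha _ ih

theorem exp_apply_mem {a : V →L[𝕜] V} {p : Submodule 𝕜 V} (hp : IsClosed (p : Set V))
    (ha : ∀ y ∈ p, a y ∈ p) {x : V} (hx : x ∈ p) : exp a x ∈ p := by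
  simpa using p.add_mem (exp_apply_sub_self_mem hp ha (ha x hx)) hx

end Exp

section Laplacian

variable {𝕜 U V W X : Type*} [RCLike 𝕜]
  [NormedAddCommGroup U] [InnerProductSpace 𝕜 U] [CompleteSpace U]
  [NormedAddCommGroup V] [InnerProductSpace 𝕜 V] [CompleteSpace V]
  [NormedAddCommGroup W] [InnerProductSpace 𝕜 W] [CompleteSpace W]
  [NormedAddCommGroup X] [InnerProductSpace 𝕜 X] [CompleteSpace X]

noncomputable def laplacian (p : U →L[𝕜] V) (q : V →L[𝕜] W) : V →L[𝕜] V :=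
  p ∘L adjoint p + adjoint q ∘L q

theorem laplacian_apply_mem_range {p : U →L[𝕜] V} {q : V →L[𝕜] W} {x : V} (hx : q x = 0) :
    laplacian p q x ∈ LinearMap.range p.toLinearMap := by
  simp [laplacian, hx]

theorem comp_laplacian {p : U →L[𝕜] V} {q : V →L[𝕜] W} {r : W →L[𝕜] X}
    (hpq : q ∘L p = 0) (hqr : r ∘L q = 0) : q ∘L laplacian p q = laplacian q r ∘L q := by
  rw [laplacian, laplacian, comp_add, add_comp, ← comp_assoc, hpq, zero_comp, zero_add,
    comp_assoc (adjoint r), hqr, comp_zero, add_zero, comp_assoc]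

theorem comp_exp_smul_laplacian {p : U →L[𝕜] V} {q : V →L[𝕜] W} {r : W →L[𝕜] X}
    (hpq : q ∘L p = 0) (hqr : r ∘L q = 0) (c : 𝕜) :
    q ∘L exp (c • laplacian p q) = exp (c • laplacian q r) ∘L q :=
  comp_exp_eq_exp_comp (by rw [comp_smul, smul_comp, comp_laplacian hpq hqr])

theorem smul_laplacian_apply_mem_range {p : U →L[𝕜] V} {q : V →L[𝕜] W} (hpq : q ∘L p = 0) (c : 𝕜) :
    ∀ y ∈ LinearMap.range p.toLinearMap, (c • laplacian p q) y ∈ LinearMap.range p.toLinearMap :=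
  fun _ hy => Submodule.smul_mem _ c <| laplacian_apply_mem_range <|
    LinearMap.range_le_ker_iff.2 (congrArg toLinearMap hpq) hy

variable [FiniteDimensional 𝕜 V] {p : U →L[𝕜] V} {q : V →L[𝕜] W}

theorem exp_smul_laplacian_apply_sub_self_mem_range (hpq : q ∘L p = 0) (c : 𝕜) {x : V}
    (hx : q x = 0) : exp (c • laplacian p q) x - x ∈ LinearMap.range p.toLinearMap :=
  exp_apply_sub_self_mem (Submodule.closed_of_finiteDimensional _)
    (smul_laplacian_apply_mem_range hpq c) (Submodule.smul_mem _ c (laplacian_apply_mem_range hx))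

theorem exp_smul_laplacian_apply_mem_range (hpq : q ∘L p = 0) (c : 𝕜) {y : V}
    (hy : y ∈ LinearMap.range p.toLinearMap) :
    exp (c • laplacian p q) y ∈ LinearMap.range p.toLinearMap :=
  exp_apply_mem (Submodule.closed_of_finiteDimensional _) (smul_laplacian_apply_mem_range hpq c) hy

end Laplacian

end ContinuousLinearMap

open ContinuousLinearMap

-- Degree `j` of the complex is the index `j + 1` here; `C 0` and `C (N + 2)` are its zero ends.
theorem stmt5_general (N : ℕ) (C : ℕ → Type)
    [∀ j, NormedAddCommGroup (C j)] [∀ j, InnerProductSpace ℂ (C j)]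
    [∀ j, FiniteDimensional ℂ (C j)]
    (P : ∀ j : ℕ, C j →L[ℂ] C (j + 1))
    (hC0 : ∀ x : C 0, x = 0)
    (hCtop : ∀ x : C (N + 2), x = 0)
    (hPP : ∀ (j : ℕ) (x : C j), P (j + 1) (P j x) = 0)
    (Δ : ∀ j : ℕ, C (j + 1) →L[ℂ] C (j + 1))
    (hΔ : ∀ j : ℕ, Δ j = (P j).comp (ContinuousLinearMap.adjoint (P j))
        + (ContinuousLinearMap.adjoint (P (j + 1))).comp (P (j + 1)))
    (T : ∀ j : ℕ, C j →L[ℂ] C j)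
    (hT : ∀ (j : ℕ) (x : C j), P j (T j x) = T (j + 1) (P j x))
    (𝒯 : ∀ j : ℕ, (LinearMap.ker (P (j + 1)).toLinearMap ⧸
            (LinearMap.range (P j).toLinearMap).comap (LinearMap.ker (P (j + 1)).toLinearMap).subtype) →ₗ[ℂ]
          (LinearMap.ker (P (j + 1)).toLinearMap ⧸
            (LinearMap.range (P j).toLinearMap).comap (LinearMap.ker (P (j + 1)).toLinearMap).subtype))
    (h𝒯 : ∀ (j : ℕ) (x : C (j + 1)) (hx : x ∈ LinearMap.ker (P (j + 1)).toLinearMap)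
        (hx' : T (j + 1) x ∈ LinearMap.ker (P (j + 1)).toLinearMap),
      𝒯 j (Submodule.Quotient.mk ⟨x, hx⟩) = Submodule.Quotient.mk ⟨T (j + 1) x, hx'⟩) :
    ∀ t : ℝ, 0 < t →
      ∑ j ∈ Finset.range (N + 1), (-1 : ℂ) ^ j * LinearMap.trace ℂ _ (𝒯 j)
        = ∑ j ∈ Finset.range (N + 1), (-1 : ℂ) ^ j *
            LinearMap.trace ℂ (C (j + 1))
              (((T (j + 1)).comp (NormedSpace.exp (-(t : ℂ) • Δ j))).toLinearMap) := by
  intro t _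
  obtain rfl : Δ = fun j => laplacian (P j) (P (j + 1)) := funext hΔ
  have hPP' : ∀ j, P (j + 1) ∘L P j = 0 := fun j => ext (hPP j)
  have hPT : ∀ j, P j ∘L T j = T (j + 1) ∘L P j := fun j => ext (hT j)
  have : Subsingleton (C 0) := ⟨fun x y => (hC0 x).trans (hC0 y).symm⟩
  have : Subsingleton (C (N + 2)) := ⟨fun x y => (hCtop x).trans (hCtop y).symm⟩
  symm
  refine LinearMap.hopf_trace_formula N (fun j => (P j).toLinearMap)
    (fun j => LinearMap.ext (hPP j))
    (fun j => (T (j + 1) ∘L exp (-(t : ℂ) • laplacian (P j) (P (j + 1)))).toLinearMap)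
    (fun j => ?_) (fun j y hy => ?_) 𝒯 (fun j x hx _ => ?_)
  · rw [← toLinearMap_comp, ← toLinearMap_comp, ← comp_assoc, hPT, comp_assoc,
      comp_exp_smul_laplacian (hPP' j) (hPP' (j + 1)), comp_assoc]
  · exact LinearMap.apply_mem_range_of_comp_eq (congrArg toLinearMap (hPT j)) _
      (exp_smul_laplacian_apply_mem_range (hPP' j) _ hy)
  · rw [h𝒯 j x hx (LinearMap.apply_mem_ker_of_comp_eq (congrArg toLinearMap (hPT (j + 1))) x hx),
      Submodule.Quotient.eq]
    show T (j + 1) x - T (j + 1) (exp (-(t : ℂ) • laplacian (P j) (P (j + 1))) x)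
      ∈ LinearMap.range (P j).toLinearMap
    rw [← map_sub, ← neg_sub, map_neg]
    exact neg_mem (LinearMap.apply_mem_range_of_comp_eq (congrArg toLinearMap (hPT j)) _
      (exp_smul_laplacian_apply_sub_self_mem_range (hPP' j) _ hx))

theorem stmt5 (N : ℕ) (C : ℕ → Type)
    [∀ j, NormedAddCommGroup (C j)] [∀ j, InnerProductSpace ℂ (C j)]
    [∀ j, FiniteDimensional ℂ (C j)]
    (P : ∀ j : ℕ, C j →L[ℂ] C (j + 1))
    (hC0 : ∀ x : C 0, x = 0)
    (hCtop : ∀ x : C (N + 2), x = 0)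
    (hPP : ∀ (j : ℕ) (x : C j), P (j + 1) (P j x) = 0)
    (Δ : ∀ j : ℕ, C (j + 1) →L[ℂ] C (j + 1))
    (hΔ : ∀ j : ℕ, Δ j = (P j).comp (ContinuousLinearMap.adjoint (P j))
        + (ContinuousLinearMap.adjoint (P (j + 1))).comp (P (j + 1)))
    (T : ∀ j : ℕ, C j →L[ℂ] C j)
    (hT : ∀ (j : ℕ) (x : C j), P j (T j x) = T (j + 1) (P j x))
    (hTΔ : ∀ j : ℕ, (T (j + 1)).comp (Δ j) = (Δ j).comp (T (j + 1)))
    (𝒯 : ∀ j : ℕ, (LinearMap.ker (P (j + 1)).toLinearMap ⧸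
            (LinearMap.range (P j).toLinearMap).comap (LinearMap.ker (P (j + 1)).toLinearMap).subtype) →ₗ[ℂ]
          (LinearMap.ker (P (j + 1)).toLinearMap ⧸
            (LinearMap.range (P j).toLinearMap).comap (LinearMap.ker (P (j + 1)).toLinearMap).subtype))
    (h𝒯 : ∀ (j : ℕ) (x : C (j + 1)) (hx : x ∈ LinearMap.ker (P (j + 1)).toLinearMap)
        (hx' : T (j + 1) x ∈ LinearMap.ker (P (j + 1)).toLinearMap),
      𝒯 j (Submodule.Quotient.mk ⟨x, hx⟩) = Submodule.Quotient.mk ⟨T (j + 1) x, hx'⟩) :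
    ∀ t : ℝ, 0 < t →
      ∑ j ∈ Finset.range (N + 1), (-1 : ℂ) ^ j * LinearMap.trace ℂ _ (𝒯 j)
        = ∑ j ∈ Finset.range (N + 1), (-1 : ℂ) ^ j *
            LinearMap.trace ℂ (C (j + 1))
              (((T (j + 1)).comp (NormedSpace.exp (-(t : ℂ) • Δ j))).toLinearMap) :=
  stmt5_general N C P hC0 hCtop hPP Δ hΔ T hT 𝒯 h𝒯
end

section
/- With notation as above, the full derivative criterion for the phase function: the critical set of Φ(x, ξ, g) = (κ(gx) − κ(x))·ξ on T*U × G equals {(x, ξ, g) : g·(x, ξ) = (x, ξ) and 𝕁(x, ξ) = 0}, i.e. Crit(Φ) = {(x, ξ, g) ∈ (Ξ ∩ T*U) × G : g·(x, ξ) = (x, ξ)}, where Ξ = 𝕁^{-1}(0) is the zero level of the momentum map. -/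
open Matrix

/-!
Differentiating `Φ(x, ξ, g) = (g x − x)·ξ` in `ξ` gives the covector `g x − x`, so criticality in
`ξ` is `g x = x`. Differentiating in `x` gives `u ↦ (g u − u)·ξ = u·(gᵀξ − ξ)`, so criticality in `x`
is `gᵀξ = ξ`, equivalently `g ξ = ξ` for orthogonal `g`. Along `t ↦ exp(tX) g` the derivative at
`t = 0` is `(X g x)·ξ`, which becomes the momentum condition `(X x)·ξ = 0` once `g x = x`.
-/

namespace ContinuousLinearMap

variable {𝕜 E E' F G : Type*} [NontriviallyNormedField 𝕜]
  [NormedAddCommGroup E] [NormedSpace 𝕜 E] [NormedAddCommGroup E'] [NormedSpace 𝕜 E']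
  [NormedAddCommGroup F] [NormedSpace 𝕜 F] [NormedAddCommGroup G] [NormedSpace 𝕜 G]

theorem coprod_eq_zero_iff {f : E →L[𝕜] G} {g : F →L[𝕜] G} :
    f.coprod g = 0 ↔ f = 0 ∧ g = 0 := by
  refine ⟨fun h => ⟨?_, ?_⟩, fun ⟨hf, hg⟩ => by ext <;> simp [hf, hg]⟩
  · simpa using congr(($h).comp (inl 𝕜 E F))
  · simpa using congr(($h).comp (inr 𝕜 E F))

theorem hasFDerivAt_apply_fst_snd (B : E' →L[𝕜] F →L[𝕜] G) (A : E →L[𝕜] E') (x : E) (ξ : F) :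
    HasFDerivAt (fun p : E × F => B (A p.1) p.2) ((B.flip ξ ∘L A).coprod (B (A x))) (x, ξ) := by
  refine (B.hasFDerivAt_of_bilinear (A.hasFDerivAt.comp (x, ξ) hasFDerivAt_fst)
    hasFDerivAt_snd).congr_fderiv ?_
  ext <;> simp

theorem fderiv_apply_fst_snd_eq_zero_iff (B : E' →L[𝕜] F →L[𝕜] G) (A : E →L[𝕜] E') (x : E)
    (ξ : F) :
    fderiv 𝕜 (fun p : E × F => B (A p.1) p.2) (x, ξ) = 0 ↔ B.flip ξ ∘L A = 0 ∧ B (A x) = 0 := by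
  rw [(hasFDerivAt_apply_fst_snd B A x ξ).fderiv, coprod_eq_zero_iff]

end ContinuousLinearMap

theorem HasDerivAt.mulVec_dotProduct {𝕜 m n : Type*} [NontriviallyNormedField 𝕜]
    [CompleteSpace 𝕜] [Fintype m] [Fintype n] {M : 𝕜 → Matrix m n 𝕜} {M' : Matrix m n 𝕜}
    {t : 𝕜} (h : HasDerivAt M M' t) (y : n → 𝕜) (ξ : m → 𝕜) :
    HasDerivAt (fun s => (M s *ᵥ y) ⬝ᵥ ξ) ((M' *ᵥ y) ⬝ᵥ ξ) t := by
  let L : Matrix m n 𝕜 →ₗ[𝕜] 𝕜 :=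
    { toFun := fun N => (N *ᵥ y) ⬝ᵥ ξ
      map_add' := fun N N' => by rw [add_mulVec, add_dotProduct]
      map_smul' := fun c N => by rw [smul_mulVec, smul_dotProduct]; rfl }
  -- matrices have no global norm; any scoped one induces the product topology used here
  open scoped Matrix.Norms.Elementwise in
  exact L.toContinuousLinearMap.hasFDerivAt.comp_hasDerivAt t h

namespace Matrix

variable {m : Type*} [Fintype m]

theorem fderiv_mulVec_sub_dotProduct_eq_zero_iff {𝕜 : Type*} [NontriviallyNormedField 𝕜]
    [CompleteSpace 𝕜] (g : Matrix m m 𝕜) (x ξ : m → 𝕜) :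
    fderiv 𝕜 (fun p : (m → 𝕜) × (m → 𝕜) => (g *ᵥ p.1 - p.1) ⬝ᵥ p.2) (x, ξ) = 0 ↔
      gᵀ *ᵥ ξ = ξ ∧ g *ᵥ x = x := by
  let B := (dotProductBilin 𝕜 𝕜 : (m → 𝕜) →ₗ[𝕜] _ →ₗ[𝕜] 𝕜).toContinuousBilinearMap
  let A := LinearMap.toContinuousLinearMap (g.mulVecLin - LinearMap.id)
  refine (B.fderiv_apply_fst_snd_eq_zero_iff A x ξ).trans (and_congr ?_ ?_)
  · rw [ContinuousLinearMap.ext_iff, ← sub_eq_zero, ← dotProduct_eq_zero_iff]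
    refine forall_congr' fun u => ?_
    change (g *ᵥ u - u) ⬝ᵥ ξ = 0 ↔ _
    rw [sub_dotProduct, sub_dotProduct, mulVec_transpose, ← dotProduct_mulVec,
      dotProduct_comm ξ, dotProduct_comm ξ]
  · rw [ContinuousLinearMap.ext_iff, ← sub_eq_zero, ← dotProduct_eq_zero_iff]
    rfl

variable [DecidableEq m]

theorem mulVec_eq_self_iff_of_mul_eq_one {R : Type*} [CommRing R] {A B : Matrix m m R}
    (h : A * B = 1) (v : m → R) : B *ᵥ v = v ↔ A *ᵥ v = v := by
  have h' : B * A = 1 := mul_eq_one_comm.mp h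
  constructor <;> intro hv
  · rw [← hv, mulVec_mulVec, h, one_mulVec, hv]
  · rw [← hv, mulVec_mulVec, h', one_mulVec, hv]

variable {𝕂 : Type*} [RCLike 𝕂]

theorem hasDerivAt_exp_smul_zero (X : Matrix m m 𝕂) :
    HasDerivAt (fun t : 𝕂 => NormedSpace.exp (t • X)) X 0 := by
  open scoped Norms.Operator in
  have h := hasDerivAt_exp_smul_const (𝕂 := 𝕂) X 0
  rw [zero_smul, NormedSpace.exp_zero, one_mul] at h
  exact h

theorem deriv_exp_smul_mul_mulVec_sub_dotProduct (X g : Matrix m m 𝕂) (x ξ : m → 𝕂) :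
    deriv (fun t : 𝕂 => ((NormedSpace.exp (t • X) * g) *ᵥ x - x) ⬝ᵥ ξ) 0
      = (X *ᵥ (g *ᵥ x)) ⬝ᵥ ξ := by
  simp_rw [sub_dotProduct, ← mulVec_mulVec]
  exact (((hasDerivAt_exp_smul_zero X).mulVec_dotProduct (g *ᵥ x) ξ).sub_const _).deriv

end Matrix

theorem stmt10 (n : ℕ) (𝔤 : Set (Matrix (Fin n) (Fin n) ℝ))
    (g : Matrix (Fin n) (Fin n) ℝ) (hg : gᵀ * g = 1)
    (x ξ : Fin n → ℝ) :
    ((fderiv ℝ (fun p : (Fin n → ℝ) × (Fin n → ℝ) =>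
          (g.mulVec p.1 - p.1) ⬝ᵥ p.2) (x, ξ) = 0)
      ∧ (∀ X ∈ 𝔤, deriv (fun t : ℝ =>
          (((NormedSpace.exp (t • X)) * g).mulVec x - x) ⬝ᵥ ξ) 0 = 0))
    ↔ (g.mulVec x = x ∧ g.mulVec ξ = ξ ∧ ∀ X ∈ 𝔤, (X.mulVec x) ⬝ᵥ ξ = 0) := by
  simp only [fderiv_mulVec_sub_dotProduct_eq_zero_iff, deriv_exp_smul_mul_mulVec_sub_dotProduct,
    mulVec_eq_self_iff_of_mul_eq_one (mul_eq_one_comm.mp hg) ξ]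
  constructor
  · rintro ⟨⟨hξ, hx⟩, hJ⟩
    exact ⟨hx, hξ, by simpa only [hx] using hJ⟩
  · rintro ⟨hx, hξ, hJ⟩
    exact ⟨⟨hξ, hx⟩, by simpa only [hx] using hJ⟩
end
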